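/- arXiv:2204.04732 — 3 statements merged into one kernel-verified Lean document; each statement's English description precedes it below -/
import Mathlib

section
/- Let f, φ : ℂ → ℂ, let z ∈ ℂ, and let μ ∈ ℂ. Assume f is real-differentiable at z, φ is real-differentiable at f(z), and ∂̄φ(f(z)) = μ·∂φ(f(z)). Then (∂f(z) + μ·conj(∂̄f(z)))·∂̄(φ∘f)(z) = (∂̄f(z) + μ·conj(∂f(z)))·∂(φ∘f)(z). In particular, if ∂f(z) + μ·conj(∂̄f(z)) ≠ 0, then ∂̄(φ∘f)(z) = ν·∂(φ∘f)(z) where ν = (∂̄f(z) + μ·conj(∂f(z)))/(∂f(z) + μ·conj(∂̄f(z))). -/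
/-!
Every real-linear map `L : ℂ → ℂ` splits as `L w = ∂L · w + ∂̄L · w̄`. Applied to the real
chain rule `D(φ ∘ f) = Dφ ∘ Df` this gives the Wirtinger chain rules
`∂(φ ∘ f) = ∂φ · ∂f + ∂̄φ · conj ∂̄f` and `∂̄(φ ∘ f) = ∂φ · ∂̄f + ∂̄φ · conj ∂f`.
Substituting `∂̄φ = μ · ∂φ`, both sides of the identity become
`∂φ · (∂f + μ · conj ∂̄f) · (∂̄f + μ · conj ∂f)`.
-/

/-- The Wirtinger derivative `∂h(z) = (1/2)(Dh(z)(1) - i·Dh(z)(i))` of `h : ℂ → ℂ`,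
where `Dh(z)` is the real Fréchet derivative. -/
noncomputable def wirtingerD (h : ℂ → ℂ) (z : ℂ) : ℂ :=
  (1 / 2) * (fderiv ℝ h z 1 - Complex.I * fderiv ℝ h z Complex.I)

/-- The conjugate Wirtinger derivative `∂̄h(z) = (1/2)(Dh(z)(1) + i·Dh(z)(i))`. -/
noncomputable def wirtingerDBar (h : ℂ → ℂ) (z : ℂ) : ℂ :=
  (1 / 2) * (fderiv ℝ h z 1 + Complex.I * fderiv ℝ h z Complex.I)

open Complex ComplexConjugate

theorem fderiv_apply_eq_wirtinger (h : ℂ → ℂ) (z w : ℂ) :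
    fderiv ℝ h z w = wirtingerD h z * w + wirtingerDBar h z * conj w := by
  have hw : w = w.re • (1 : ℂ) + w.im • I := by simp [re_add_im]
  have hw_conj : conj w = (w.re : ℂ) - (w.im : ℂ) * I := by simp [Complex.ext_iff]
  rw [wirtingerD, wirtingerDBar, hw_conj]
  conv_lhs => rw [hw, map_add, map_smul, map_smul]
  nth_rewrite 3 [hw]
  simp only [real_smul]
  linear_combination ((w.im : ℂ) * fderiv ℝ h z I) * I_sq

section ChainRule

variable {f φ : ℂ → ℂ} {z : ℂ}

theorem wirtingerD_comp (hφ : DifferentiableAt ℝ φ (f z)) (hf : DifferentiableAt ℝ f z) :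
    wirtingerD (φ ∘ f) z =
      wirtingerD φ (f z) * wirtingerD f z + wirtingerDBar φ (f z) * conj (wirtingerDBar f z) := by
  rw [wirtingerD, fderiv_comp z hφ hf]
  simp only [ContinuousLinearMap.comp_apply, fderiv_apply_eq_wirtinger φ]
  simp only [wirtingerD, wirtingerDBar, map_mul, map_add, conj_I, map_div₀, map_one,
    map_ofNat]
  ring

theorem wirtingerDBar_comp (hφ : DifferentiableAt ℝ φ (f z)) (hf : DifferentiableAt ℝ f z) :
    wirtingerDBar (φ ∘ f) z =
      wirtingerD φ (f z) * wirtingerDBar f z + wirtingerDBar φ (f z) * conj (wirtingerD f z) := by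
  rw [wirtingerDBar, fderiv_comp z hφ hf]
  simp only [ContinuousLinearMap.comp_apply, fderiv_apply_eq_wirtinger φ]
  simp only [wirtingerD, wirtingerDBar, map_mul, map_sub, conj_I, map_div₀, map_one,
    map_ofNat]
  ring

end ChainRule

/-- The classical pullback formula for Beltrami coefficients: if `∂̄φ(f z) = μ·∂φ(f z)`,
then `(∂f + μ·conj ∂̄f)·∂̄(φ∘f) = (∂̄f + μ·conj ∂f)·∂(φ∘f)` at `z`; in particular,
when `∂f(z) + μ·conj(∂̄f(z)) ≠ 0`, the composite `φ∘f` is isothermal for the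
pulled-back coefficient `ν = (∂̄f + μ·conj ∂f)/(∂f + μ·conj ∂̄f)`. -/
theorem beltrami_pullback (f φ : ℂ → ℂ) (z μ : ℂ)
    (hf : DifferentiableAt ℝ f z) (hφ : DifferentiableAt ℝ φ (f z))
    (hiso : wirtingerDBar φ (f z) = μ * wirtingerD φ (f z)) :
    (wirtingerD f z + μ * (starRingEnd ℂ) (wirtingerDBar f z)) * wirtingerDBar (φ ∘ f) z =
      (wirtingerDBar f z + μ * (starRingEnd ℂ) (wirtingerD f z)) * wirtingerD (φ ∘ f) z ∧
    (wirtingerD f z + μ * (starRingEnd ℂ) (wirtingerDBar f z) ≠ 0 →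
      wirtingerDBar (φ ∘ f) z =
        (wirtingerDBar f z + μ * (starRingEnd ℂ) (wirtingerD f z)) /
          (wirtingerD f z + μ * (starRingEnd ℂ) (wirtingerDBar f z)) *
          wirtingerD (φ ∘ f) z) := by
  have pullback : (wirtingerD f z + μ * conj (wirtingerDBar f z)) * wirtingerDBar (φ ∘ f) z =
      (wirtingerDBar f z + μ * conj (wirtingerD f z)) * wirtingerD (φ ∘ f) z := by
    rw [wirtingerD_comp hφ hf, wirtingerDBar_comp hφ hf, hiso]
    ring
  refine ⟨pullback, fun hne => ?_⟩
  rw [div_mul_eq_mul_div, eq_div_iff hne]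
  linear_combination pullback
end

section
/- Let U ⊆ ℂ be open, let w : ℂ → ℂ be twice continuously real-differentiable on U (ContDiffOn ℝ 2), let φ, μ : ℂ → ℂ be real-differentiable on U, and suppose ∂̄w(z) = −μ(z)·∂w(z) for all z ∈ U. Then for every natural number n and every z ∈ U, ∂̄(ζ ↦ φ(ζ)·(∂w(ζ))ⁿ)(z) + μ(z)·∂(ζ ↦ φ(ζ)·(∂w(ζ))ⁿ)(z) = (∂̄φ(z) + μ(z)·∂φ(z) − n·φ(z)·∂μ(z))·(∂w(z))ⁿ. -/
/-!
The operator `∂̄ + μ·∂` obeys the Leibniz rule. Since `∂̄` and `∂` commute on `C²` functions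
(symmetry of the second derivative), applying `∂` to the Beltrami equation `∂̄w = -μ·∂w` gives
`(∂̄ + μ·∂)(∂w) = -∂μ·∂w`; so `∂w` is an eigenfunction with eigenvalue `-∂μ`, its `n`-th power one
with eigenvalue `-n·∂μ`, and the Leibniz rule for `φ·(∂w)ⁿ` finishes the computation.
-/

open Complex Filter Topology

section Wirtinger

variable {f g w : ℂ → ℂ} {z : ℂ}

theorem wirtingerD_congr_of_eventuallyEq (h : f =ᶠ[𝓝 z] g) :
    wirtingerD f z = wirtingerD g z := by
  rw [wirtingerD, wirtingerD, h.fderiv_eq]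

theorem wirtingerD_neg : wirtingerD (fun ζ => -f ζ) z = -wirtingerD f z := by
  simp only [wirtingerD, fderiv_fun_neg, neg_apply]
  ring

theorem wirtingerD_mul (hf : DifferentiableAt ℝ f z) (hg : DifferentiableAt ℝ g z) :
    wirtingerD (fun ζ => f ζ * g ζ) z = wirtingerD f z * g z + f z * wirtingerD g z := by
  simp only [wirtingerD, fderiv_fun_mul hf hg, add_apply, smul_apply, smul_eq_mul]
  ring

theorem wirtingerDBar_mul (hf : DifferentiableAt ℝ f z) (hg : DifferentiableAt ℝ g z) :
    wirtingerDBar (fun ζ => f ζ * g ζ) z = wirtingerDBar f z * g z + f z * wirtingerDBar g z := by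
  simp only [wirtingerDBar, fderiv_fun_mul hf hg, add_apply, smul_apply, smul_eq_mul]
  ring

theorem fderiv_linear_combination_fderiv_apply (hw : DifferentiableAt ℝ (fderiv ℝ w) z)
    (a b : ℂ) (u : ℂ) :
    fderiv ℝ (fun ζ => a * fderiv ℝ w ζ 1 + b * fderiv ℝ w ζ I) z u =
      a * fderiv ℝ (fderiv ℝ w) z u 1 + b * fderiv ℝ (fderiv ℝ w) z u I := by
  have h1 := hw.clm_apply (differentiableAt_const (1 : ℂ))
  have hI := hw.clm_apply (differentiableAt_const I)
  rw [fderiv_fun_add (h1.const_mul a) (hI.const_mul b), fderiv_const_mul h1, fderiv_const_mul hI,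
    fderiv_clm_apply hw (differentiableAt_const _), fderiv_clm_apply hw (differentiableAt_const _)]
  simp

theorem ContDiffAt.differentiableAt_fderiv (hw : ContDiffAt ℝ 2 w z) :
    DifferentiableAt ℝ (fderiv ℝ w) z :=
  (hw.fderiv_right (by norm_num)).differentiableAt one_ne_zero

theorem differentiableAt_wirtingerD (hw : ContDiffAt ℝ 2 w z) :
    DifferentiableAt ℝ (wirtingerD w) z := by
  have hF := hw.differentiableAt_fderiv
  exact ((hF.clm_apply (differentiableAt_const _)).sub
    ((hF.clm_apply (differentiableAt_const _)).const_mul I)).const_mul _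

theorem wirtingerDBar_wirtingerD_comm (hw : ContDiffAt ℝ 2 w z) :
    wirtingerDBar (wirtingerD w) z = wirtingerD (wirtingerDBar w) z := by
  have hF := hw.differentiableAt_fderiv
  have hsymm := hw.isSymmSndFDerivAt (by simp) 1 I
  have hD : wirtingerD w = fun ζ => (1 / 2) * fderiv ℝ w ζ 1 + (-I / 2) * fderiv ℝ w ζ I := by
    funext ζ; rw [wirtingerD]; ring
  have hDBar : wirtingerDBar w = fun ζ => (1 / 2) * fderiv ℝ w ζ 1 + (I / 2) * fderiv ℝ w ζ I := by
    funext ζ; rw [wirtingerDBar]; ring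
  rw [wirtingerDBar, wirtingerD, hD, hDBar]
  simp only [fderiv_linear_combination_fderiv_apply hF]
  rw [hsymm]
  ring

end Wirtinger

/-- Up to the conformal factor, the Maaß `∂̄`-operator of the complex structure with Beltrami
coefficient `μ`. -/
noncomputable def beltramiDBar (μ h : ℂ → ℂ) (z : ℂ) : ℂ :=
  wirtingerDBar h z + μ z * wirtingerD h z

section BeltramiDBar

variable {μ f g w : ℂ → ℂ} {z : ℂ}

theorem beltramiDBar_mul (hf : DifferentiableAt ℝ f z) (hg : DifferentiableAt ℝ g z) :
    beltramiDBar μ (fun ζ => f ζ * g ζ) z =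
      beltramiDBar μ f z * g z + f z * beltramiDBar μ g z := by
  rw [beltramiDBar, beltramiDBar, beltramiDBar, wirtingerDBar_mul hf hg, wirtingerD_mul hf hg]
  ring

theorem beltramiDBar_pow_of_eq_mul {c : ℂ} (hg : DifferentiableAt ℝ g z)
    (hgc : beltramiDBar μ g z = c * g z) (n : ℕ) :
    beltramiDBar μ (fun ζ => g ζ ^ n) z = n * c * g z ^ n := by
  induction n with
  | zero => simp [beltramiDBar, wirtingerD, wirtingerDBar]
  | succ n ih =>
    simp only [pow_succ]
    rw [beltramiDBar_mul (hg.fun_pow n) hg, ih, hgc]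
    push_cast
    ring

theorem beltramiDBar_wirtingerD (hw : ContDiffAt ℝ 2 w z) (hμ : DifferentiableAt ℝ μ z)
    (hiso : wirtingerDBar w =ᶠ[𝓝 z] fun ζ => -μ ζ * wirtingerD w ζ) :
    beltramiDBar μ (wirtingerD w) z = -wirtingerD μ z * wirtingerD w z := by
  rw [beltramiDBar, wirtingerDBar_wirtingerD_comm hw, wirtingerD_congr_of_eventuallyEq hiso,
    wirtingerD_mul hμ.fun_neg (differentiableAt_wirtingerD hw), wirtingerD_neg]
  ring

end BeltramiDBar

/-- The core Maaß-derivative computation of Section 5.1: if `w` is a holomorphic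
coordinate for the Beltrami coefficient `μ` on the open set `U` (i.e. `∂̄w = −μ·∂w`
on `U`), then for every `n` and `z ∈ U`,
`(∂̄ + μ·∂)(φ·(∂w)ⁿ)(z) = (∂̄φ(z) + μ(z)·∂φ(z) − n·φ(z)·∂μ(z))·(∂w(z))ⁿ`. -/
theorem maass_dbar_computation (U : Set ℂ) (hU : IsOpen U) (w φ μ : ℂ → ℂ)
    (hw : ContDiffOn ℝ 2 w U)
    (hφ : DifferentiableOn ℝ φ U) (hμ : DifferentiableOn ℝ μ U)
    (hiso : ∀ z ∈ U, wirtingerDBar w z = -μ z * wirtingerD w z) :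
    ∀ (n : ℕ), ∀ z ∈ U,
      wirtingerDBar (fun ζ => φ ζ * (wirtingerD w ζ) ^ n) z +
          μ z * wirtingerD (fun ζ => φ ζ * (wirtingerD w ζ) ^ n) z =
        (wirtingerDBar φ z + μ z * wirtingerD φ z - (n : ℂ) * φ z * wirtingerD μ z) *
          (wirtingerD w z) ^ n := by
  intro n z hz
  have hUz : U ∈ 𝓝 z := hU.mem_nhds hz
  have hwz : ContDiffAt ℝ 2 w z := hw.contDiffAt hUz
  have hDw : DifferentiableAt ℝ (wirtingerD w) z := differentiableAt_wirtingerD hwz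
  have hpow := beltramiDBar_pow_of_eq_mul hDw
    (beltramiDBar_wirtingerD hwz ((hμ z hz).differentiableAt hUz) (eventually_of_mem hUz hiso)) n
  change beltramiDBar μ (fun ζ => φ ζ * wirtingerD w ζ ^ n) z = _
  rw [beltramiDBar_mul ((hφ z hz).differentiableAt hUz) (hDw.fun_pow n), hpow, beltramiDBar]
  ring
end

section
/- Let R be a commutative ring, let k ≥ 2 be a natural number, and let p, q ∈ R[X] be polynomials with p.coeff 0 = 0, p.coeff 1 = 1, q.coeff 0 = 0, q.coeff 1 = 1, and p.coeff i = 0 and q.coeff i = 0 for all i with 2 ≤ i < k. Then (p.comp q).coeff 0 = 0, (p.comp q).coeff 1 = 1, and for every i with 2 ≤ i ≤ 2k − 2 one has (p.comp q).coeff i = p.coeff i + q.coeff i. -/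
/-!
Write `p = X + f` and `q = X + g`, where `f` and `g` are divisible by `X ^ k`. Then
`p ∘ q = q + f ∘ q`, and `f ∘ q ≡ f` modulo `X ^ (2k - 1)`: each monomial `X ^ n` of `f` has
`n ≥ k`, and `X ^ (n + k - 1)` divides `q ^ n - X ^ n` because `X ^ k ∣ q - X` and `X ∣ q`.
Hence `p ∘ q ≡ p + q - X` modulo `X ^ (2k - 1)`, which is the claim on coefficients.
-/

open Polynomial

theorem pow_add_dvd_pow_sub_pow_of_pow_succ_dvd_sub {R : Type*} [CommRing R] {a b : R} {m : ℕ}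
    (h : a ^ (m + 1) ∣ b - a) (n : ℕ) : a ^ (n + m) ∣ b ^ n - a ^ n := by
  induction n with
  | zero => simp
  | succ n ih =>
    have ha : a ∣ b := dvd_sub_self_right.mp ((dvd_pow_self a m.succ_ne_zero).trans h)
    have hsplit : b ^ (n + 1) - a ^ (n + 1) = b * (b ^ n - a ^ n) + a ^ n * (b - a) := by ring
    rw [hsplit]
    refine dvd_add ?_ ?_
    · rw [show n + 1 + m = 1 + (n + m) by omega, pow_add, pow_one]
      exact mul_dvd_mul ha ih
    · rw [show n + 1 + m = n + (m + 1) by omega, pow_add]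
      exact mul_dvd_mul_left _ h

section

variable {R : Type*} [CommRing R]

theorem X_pow_add_dvd_comp_sub {f q : R[X]} {k m : ℕ} (hf : X ^ k ∣ f)
    (hq : X ^ (m + 1) ∣ q - X) : X ^ (k + m) ∣ f.comp q - f := by
  have hsum : f.comp q - f = ∑ n ∈ f.support, C (f.coeff n) * (q ^ n - X ^ n) := by
    rw [comp_eq_sum_left]
    nth_rw 2 [← f.sum_C_mul_X_pow_eq]
    simp only [Polynomial.sum, mul_sub, Finset.sum_sub_distrib]
  rw [hsum]
  refine Finset.dvd_sum fun n hn => ?_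
  have hkn : k ≤ n := by
    by_contra! hnk
    exact mem_support_iff.mp hn (X_pow_dvd_iff.mp hf n hnk)
  exact dvd_mul_of_dvd_right ((pow_dvd_pow X (by omega)).trans
    (pow_add_dvd_pow_sub_pow_of_pow_succ_dvd_sub hq n)) _

theorem X_pow_dvd_comp_sub_add_sub_X {p q : R[X]} {k : ℕ} (hk : 1 ≤ k)
    (hp : X ^ k ∣ p - X) (hq : X ^ k ∣ q - X) :
    X ^ (2 * k - 1) ∣ p.comp q - (p + q - X) := by
  obtain ⟨m, rfl⟩ := Nat.exists_eq_add_of_le' hk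
  have hcomp : p.comp q - (p + q - X) = (p - X).comp q - (p - X) := by
    rw [sub_comp, X_comp]; ring
  rw [hcomp, show 2 * (m + 1) - 1 = m + 1 + m by omega]
  exact X_pow_add_dvd_comp_sub hp hq

theorem X_pow_dvd_sub_X {p : R[X]} {k : ℕ} (h0 : p.coeff 0 = 0) (h1 : p.coeff 1 = 1)
    (h : ∀ i, 2 ≤ i → i < k → p.coeff i = 0) : X ^ k ∣ p - X := by
  refine X_pow_dvd_iff.mpr fun d hd => ?_
  rcases Nat.lt_or_ge d 2 with hd2 | hd2
  · interval_cases d <;> simp [h0, h1]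
  · simp [h d hd2 hd, coeff_X, show 1 ≠ d by omega]

end

/-- Model jet group: for polynomials `p, q` of the form `X + (terms of degree ≥ k)`
with `k ≥ 2`, composition fixes the coefficients in degrees `0` and `1` and is
addition on the coefficients in degrees `2 ≤ i ≤ 2k − 2`. -/
theorem jet_group_comp_coeff (R : Type*) [CommRing R] (k : ℕ) (hk : 2 ≤ k)
    (p q : Polynomial R)
    (hp0 : p.coeff 0 = 0) (hp1 : p.coeff 1 = 1)
    (hq0 : q.coeff 0 = 0) (hq1 : q.coeff 1 = 1)
    (hp : ∀ i, 2 ≤ i → i < k → p.coeff i = 0)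
    (hq : ∀ i, 2 ≤ i → i < k → q.coeff i = 0) :
    (p.comp q).coeff 0 = 0 ∧ (p.comp q).coeff 1 = 1 ∧
      ∀ i, 2 ≤ i → i ≤ 2 * k - 2 → (p.comp q).coeff i = p.coeff i + q.coeff i := by
  have hdvd := X_pow_dvd_comp_sub_add_sub_X (by omega)
    (X_pow_dvd_sub_X hp0 hp1 hp) (X_pow_dvd_sub_X hq0 hq1 hq)
  have hcoeff : ∀ i < 2 * k - 1,
      (p.comp q).coeff i = p.coeff i + q.coeff i - (X : R[X]).coeff i := fun i hi => by
    simpa [sub_eq_zero] using X_pow_dvd_iff.mp hdvd i hi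
  refine ⟨?_, ?_, fun i hi2 hi => ?_⟩
  · simp [hcoeff 0 (by omega), hp0, hq0]
  · simp [hcoeff 1 (by omega), hp1, hq1]
  · simp [hcoeff i (by omega), coeff_X, show 1 ≠ i by omega]
end
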